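/- Let n = 2^r m where m is odd and r ≥ 0. Then C_{U(n)^2}(n) ≥ 2^r · 3^{Ω(m)}; that is, there exists a sequence of length 2^r · 3^{Ω(m)} − 1 in Z_n having no nonempty subsequence of consecutive terms which is a U(n)^2-weighted zero-sum sequence. -/

import Mathlib

/-!
The bound is multiplicative. Suppose `L₁` over `ℤ/n₁` and `L₂` over `ℤ/n₂` have no consecutive
`U²`-weighted zero-sum. Over `ℤ/n₁n₂`, place lifts of the terms of `L₁` between `|L₁| + 1` copies
of `n₁ · L₂`; this sequence has length `(|L₁| + 1)(|L₂| + 1) - 1`. A consecutive block meeting a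
lifted term of `L₁` reduces modulo `n₁` to a consecutive block of `L₁` padded with zeros, while a
block inside a copy of `n₁ · L₂` has weighted sum `n₁ · s`, which vanishes only if `s ≡ 0 (mod n₂)`.
For the primes, `[1]` works modulo `2`, and `[1, -c]` with `c` a non-square works modulo an odd
prime, since `u² - v²c = 0` would make `c` a square.
-/

/-- A list `L` over `ZMod n` is an `A`-weighted zero-sum sequence if there are weights
`a₁, …, a_k ∈ A` (one per term) with `a₁x₁ + ⋯ + a_kx_k = 0`. -/
def IsWeightedZeroSum {n : ℕ} (A : Set (ZMod n)) (L : List (ZMod n)) : Prop :=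
  ∃ a : List (ZMod n), a.length = L.length ∧ (∀ w ∈ a, w ∈ A) ∧
    (List.zipWith (· * ·) a L).sum = 0

/-- `L` has a nonempty subsequence of consecutive terms which is an
`A`-weighted zero-sum sequence. -/
def HasConsecWZS {n : ℕ} (A : Set (ZMod n)) (L : List (ZMod n)) : Prop :=
  ∃ l₁ l₂ l₃ : List (ZMod n), L = l₁ ++ l₂ ++ l₃ ∧ l₂ ≠ [] ∧ IsWeightedZeroSum A l₂

open List

namespace List

variable {α β : Type*}

def interleaveBlock (B : List α) : List α → List α
  | [] => B
  | x :: xs => B ++ x :: interleaveBlock B xs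

variable (B : List α)

theorem length_interleaveBlock_add_one (xs : List α) :
    (interleaveBlock B xs).length + 1 = (xs.length + 1) * (B.length + 1) := by
  induction xs with
  | nil => simp [interleaveBlock]
  | cons x xs ih => simp only [interleaveBlock, length_append, length_cons]; rw [ih]; ring

theorem map_interleaveBlock (f : α → β) (xs : List α) :
    (interleaveBlock B xs).map f = interleaveBlock (B.map f) (xs.map f) := by
  induction xs with
  | nil => rfl
  | cons x xs ih => simp [interleaveBlock, ih]

theorem filter_interleaveBlock {p : α → Bool} (hB : ∀ b ∈ B, p b = false) {xs : List α}
    (hxs : ∀ x ∈ xs, p x) : (interleaveBlock B xs).filter p = xs := by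
  induction xs with
  | nil => exact filter_eq_nil_iff.2 (by simpa [interleaveBlock] using hB)
  | cons x xs ih =>
    simp only [interleaveBlock, filter_append, filter_eq_nil_iff.2 (by simpa using hB), nil_append,
      filter_cons, hxs x mem_cons_self, if_true, ih fun y hy => hxs y (mem_cons_of_mem x hy)]

variable {B}

theorem IsInfix.of_append_cons {l R : List α} {z : α} (h : l <:+: B ++ z :: R) (hz : z ∉ l) :
    l <:+: B ∨ l <:+: R := by
  rcases infix_append_iff.1 h with h | h | ⟨l₁, l₂, rfl, hl₁, hl₂⟩
  · exact Or.inl h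
  · rcases infix_cons_iff.1 h with h | h
    · rcases prefix_cons_iff.1 h with rfl | ⟨t, rfl, -⟩
      · exact Or.inl nil_infix
      · exact absurd mem_cons_self hz
    · exact Or.inr h
  · rcases prefix_cons_iff.1 hl₂ with rfl | ⟨t, rfl, -⟩
    · exact Or.inl (by simpa using hl₁.isInfix)
    · exact absurd (mem_append_right l₁ mem_cons_self) hz

theorem IsInfix.of_interleaveBlock {l xs : List α} (h : l <:+: interleaveBlock B xs)
    (hxs : ∀ x ∈ xs, x ∉ l) : l <:+: B := by
  induction xs with
  | nil => exact h
  | cons x xs ih =>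
    exact (h.of_append_cons (hxs x mem_cons_self)).elim id
      fun h => ih h fun y hy => hxs y (mem_cons_of_mem x hy)

theorem map_sum_zipWith_mul {R S : Type*} [Semiring R] [Semiring S] (f : R →+* S) (a l : List R) :
    f (zipWith (· * ·) a l).sum = (zipWith (· * ·) (a.map f) (l.map f)).sum := by
  simp [map_list_sum, map_zipWith, zipWith_map]

theorem sum_zipWith_mul_map_mul_left {R : Type*} [CommSemiring R] (c : R) (a l : List R) :
    (zipWith (· * ·) a (l.map (c * ·))).sum = c * (zipWith (· * ·) a l).sum := by
  simp [zipWith_map_right, mul_left_comm]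

theorem exists_sublist_sum_zipWith_filter {R : Type*} [Semiring R] (p : R → Bool) {l : List R}
    (hl : ∀ x ∈ l, p x = false → x = 0) {a : List R} (ha : a.length = l.length) :
    ∃ a', a' <+ a ∧ a'.length = (l.filter p).length ∧
      (zipWith (· * ·) a' (l.filter p)).sum = (zipWith (· * ·) a l).sum := by
  induction l generalizing a with
  | nil => exact ⟨[], nil_sublist a, by simp, by simp⟩
  | cons x l ih =>
    obtain ⟨w, a, rfl⟩ := exists_cons_of_length_eq_add_one ha
    obtain ⟨a', ha', hlen, hsum⟩ := ih (fun y hy => hl y (mem_cons_of_mem x hy))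
      (Nat.succ_injective ha)
    by_cases hx : p x
    · rw [filter_cons_of_pos hx]
      exact ⟨w :: a', ha'.cons_cons w, by simp [hlen], by simp [hsum]⟩
    · rw [filter_cons_of_neg hx]
      exact ⟨a', ha'.cons w, hlen, by simp [hsum, hl x mem_cons_self (by simpa using hx)]⟩

end List

namespace ZMod

theorem castHom_cast {m n : ℕ} [NeZero m] [NeZero n] (h : m ∣ n) (x : ZMod m) :
    castHom h (ZMod m) x.cast = x :=
  cast_cast_zmod_of_le (Nat.le_of_dvd (NeZero.pos n) h) x

theorem map_castHom_map_cast {m n : ℕ} [NeZero m] [NeZero n] (h : m ∣ n) (L : List (ZMod m)) :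
    (L.map (cast : ZMod m → ZMod n)).map (castHom h (ZMod m)) = L := by
  simp only [map_map, Function.comp_def, castHom_cast, map_id']

theorem natCast_mul_eq_zero_iff (n₁ n₂ : ℕ) [NeZero n₁] [NeZero n₂] (z : ZMod (n₁ * n₂)) :
    (n₁ : ZMod (n₁ * n₂)) * z = 0 ↔ castHom (dvd_mul_left n₂ n₁) (ZMod n₂) z = 0 := by
  rw [← natCast_zmod_val z, ← Nat.cast_mul, map_natCast, natCast_eq_zero_iff,
    natCast_eq_zero_iff]
  exact Nat.mul_dvd_mul_iff_left (Nat.pos_of_ne_zero (NeZero.ne n₁))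

end ZMod

section WeightedZeroSum

variable {n d : ℕ} {A : Set (ZMod n)}

theorem hasConsecWZS_iff {L : List (ZMod n)} :
    HasConsecWZS A L ↔ ∃ l, l <:+: L ∧ l ≠ [] ∧ IsWeightedZeroSum A l := by
  constructor
  · rintro ⟨l₁, l, l₃, rfl, hl, hA⟩
    exact ⟨l, infix_append' l₁ l l₃ |>.trans (by simp), hl, hA⟩
  · rintro ⟨l, ⟨l₁, l₃, rfl⟩, hl, hA⟩
    exact ⟨l₁, l, l₃, rfl, hl, hA⟩

theorem ne_zero_of_not_hasConsecWZS (h1 : 1 ∈ A) {L : List (ZMod n)}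
    (hL : ¬ HasConsecWZS A L) {x : ZMod n} (hx : x ∈ L) : x ≠ 0 := by
  rintro rfl
  exact hL (hasConsecWZS_iff.2
    ⟨[0], (singleton_infix_iff _ _).2 hx, by simp, [1], rfl, by simpa, by simp⟩)

theorem IsWeightedZeroSum.map {B : Set (ZMod d)} (f : ZMod n →+* ZMod d)
    (hf : ∀ a ∈ A, f a ∈ B) {l : List (ZMod n)} (h : IsWeightedZeroSum A l) :
    IsWeightedZeroSum B (l.map f) := by
  obtain ⟨a, hlen, hA, hsum⟩ := h
  refine ⟨a.map f, by simp [hlen], by simpa using fun w hw => hf w (hA w hw), ?_⟩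
  rw [← map_sum_zipWith_mul, hsum, map_zero]

theorem IsWeightedZeroSum.filter (p : ZMod n → Bool) {l : List (ZMod n)}
    (hl : ∀ x ∈ l, p x = false → x = 0) (h : IsWeightedZeroSum A l) :
    IsWeightedZeroSum A (l.filter p) := by
  obtain ⟨a, hlen, hA, hsum⟩ := h
  obtain ⟨a', ha', hlen', hsum'⟩ := exists_sublist_sum_zipWith_filter p hl hlen
  exact ⟨a', hlen', fun w hw => hA w (ha'.subset hw), hsum'.trans hsum⟩

end WeightedZeroSum

theorem IsWeightedZeroSum.of_map_natCast_mul {n₁ n₂ : ℕ} [NeZero n₁] [NeZero n₂]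
    {A : Set (ZMod (n₁ * n₂))} {B : Set (ZMod n₂)}
    (hA : ∀ a ∈ A, ZMod.castHom (dvd_mul_left n₂ n₁) (ZMod n₂) a ∈ B) {l : List (ZMod (n₁ * n₂))}
    (h : IsWeightedZeroSum A (l.map ((n₁ : ZMod (n₁ * n₂)) * ·))) :
    IsWeightedZeroSum B (l.map (ZMod.castHom (dvd_mul_left n₂ n₁) (ZMod n₂))) := by
  obtain ⟨a, hlen, ha, hsum⟩ := h
  rw [sum_zipWith_mul_map_mul_left, ZMod.natCast_mul_eq_zero_iff] at hsum
  exact ⟨a.map _, by simpa using hlen, by simpa using fun w hw => hA w (ha w hw),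
    (map_sum_zipWith_mul _ a l).symm.trans hsum⟩

def unitSquares (n : ℕ) : Set (ZMod n) := {x | ∃ u : (ZMod n)ˣ, (u : ZMod n) ^ 2 = x}

theorem one_mem_unitSquares (n : ℕ) : (1 : ZMod n) ∈ unitSquares n := ⟨1, by simp⟩

theorem castHom_mem_unitSquares {n d : ℕ} (h : d ∣ n) {x : ZMod n} (hx : x ∈ unitSquares n) :
    ZMod.castHom h (ZMod d) x ∈ unitSquares d := by
  obtain ⟨u, rfl⟩ := hx
  exact ⟨Units.map (ZMod.castHom h (ZMod d)).toMonoidHom u, (map_pow _ _ 2).symm⟩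

theorem mul_eq_zero_iff_of_mem_unitSquares {n : ℕ} {w : ZMod n} (hw : w ∈ unitSquares n)
    {x : ZMod n} :
    w * x = 0 ↔ x = 0 := by
  obtain ⟨u, rfl⟩ := hw
  exact (u ^ 2).mul_right_eq_zero

theorem isWeightedZeroSum_unitSquares_singleton_iff {n : ℕ} {x : ZMod n} :
    IsWeightedZeroSum (unitSquares n) [x] ↔ x = 0 := by
  constructor
  · rintro ⟨a, hlen, hA, hsum⟩
    obtain ⟨w, rfl⟩ := length_eq_one_iff.1 hlen
    exact (mul_eq_zero_iff_of_mem_unitSquares (hA w mem_cons_self)).1 (by simpa using hsum)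
  · rintro rfl
    exact ⟨[1], rfl, by simpa using one_mem_unitSquares n, by simp⟩

theorem not_hasConsecWZS_unitSquares_singleton {n : ℕ} {x : ZMod n} (hx : x ≠ 0) :
    ¬ HasConsecWZS (unitSquares n) [x] := by
  rw [hasConsecWZS_iff]
  rintro ⟨l, hl, hne, hzero⟩
  obtain rfl : l = [x] := by simpa [infix_cons_iff, prefix_cons_iff, hne] using hl
  exact hx (isWeightedZeroSum_unitSquares_singleton_iff.1 hzero)

theorem not_hasConsecWZS_unitSquares_pair {n : ℕ} {x y : ZMod n} (hx : x ≠ 0) (hy : y ≠ 0)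
    (hxy : ¬ IsWeightedZeroSum (unitSquares n) [x, y]) : ¬ HasConsecWZS (unitSquares n) [x, y] := by
  rw [hasConsecWZS_iff]
  rintro ⟨l, hl, hne, hzero⟩
  obtain rfl | rfl | rfl : l = [x] ∨ l = [y] ∨ l = [x, y] := by
    simp [infix_cons_iff, prefix_cons_iff, hne] at hl
    aesop
  · exact hx (isWeightedZeroSum_unitSquares_singleton_iff.1 hzero)
  · exact hy (isWeightedZeroSum_unitSquares_singleton_iff.1 hzero)
  · exact hxy hzero

theorem not_hasConsecWZS_interleaveBlock {n₁ n₂ : ℕ} [NeZero n₁] [NeZero n₂]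
    {L₁ : List (ZMod n₁)} {L₂ : List (ZMod n₂)}
    (h₁ : ¬ HasConsecWZS (unitSquares n₁) L₁) (h₂ : ¬ HasConsecWZS (unitSquares n₂) L₂) :
    ¬ HasConsecWZS (unitSquares (n₁ * n₂))
      (interleaveBlock (L₂.map fun y => (n₁ : ZMod (n₁ * n₂)) * y.cast) (L₁.map ZMod.cast)) := by
  let φ := ZMod.castHom (dvd_mul_right n₁ n₂) (ZMod n₁)
  have hφ_block (y : ZMod n₂) : φ ((n₁ : ZMod (n₁ * n₂)) * y.cast) = 0 := by
    rw [map_mul, map_natCast, ZMod.natCast_self, zero_mul]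
  have hL₁ : ∀ x ∈ L₁, x ≠ 0 := fun x => ne_zero_of_not_hasConsecWZS (one_mem_unitSquares n₁) h₁
  rw [hasConsecWZS_iff]
  rintro ⟨l, hl, hne, hzero⟩
  by_cases hred : (l.map φ).filter (· ≠ 0) = []
  · have hblock : l <:+: L₂.map fun y => (n₁ : ZMod (n₁ * n₂)) * y.cast := by
      refine hl.of_interleaveBlock fun e he hel => ?_
      obtain ⟨x, hx, rfl⟩ := mem_map.1 he
      have := filter_eq_nil_iff.1 hred _ (mem_map_of_mem (f := φ) hel)
      exact hL₁ x hx (by simpa [φ, ZMod.castHom_cast] using this)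
    obtain ⟨l', hl', rfl⟩ := infix_map_iff.1 hblock
    refine h₂ (hasConsecWZS_iff.2 ⟨l', hl', by simpa using hne, ?_⟩)
    have := IsWeightedZeroSum.of_map_natCast_mul (B := unitSquares n₂)
      (fun a ha => castHom_mem_unitSquares _ ha) (l := l'.map ZMod.cast) (by rwa [map_map])
    rwa [ZMod.map_castHom_map_cast] at this
  · refine h₁ (hasConsecWZS_iff.2 ⟨_, ?_, hred, ?_⟩)
    · have := (hl.map φ).filter (· ≠ 0)
      rwa [map_interleaveBlock, ZMod.map_castHom_map_cast, filter_interleaveBlock] at this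
      · simp [hφ_block]
      · simpa using hL₁
    · exact ((hzero.map φ fun a ha => castHom_mem_unitSquares _ ha).filter _ (by simp))

/-- `k ≤ C_{U(n)²}(n)`, witnessed by a sequence of length `k - 1`. -/
def CSquaresAtLeast (n k : ℕ) : Prop :=
  ∃ L : List (ZMod n), L.length + 1 = k ∧ ¬ HasConsecWZS (unitSquares n) L

theorem cSquaresAtLeast_one (n : ℕ) : CSquaresAtLeast n 1 :=
  ⟨[], rfl, fun h => by simp [hasConsecWZS_iff] at h⟩

theorem CSquaresAtLeast.mul {n₁ n₂ k₁ k₂ : ℕ} [NeZero n₁] [NeZero n₂]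
    (h₁ : CSquaresAtLeast n₁ k₁) (h₂ : CSquaresAtLeast n₂ k₂) :
    CSquaresAtLeast (n₁ * n₂) (k₁ * k₂) := by
  obtain ⟨L₁, rfl, hL₁⟩ := h₁
  obtain ⟨L₂, rfl, hL₂⟩ := h₂
  exact ⟨_, by rw [length_interleaveBlock_add_one, length_map, length_map],
    not_hasConsecWZS_interleaveBlock hL₁ hL₂⟩

theorem cSquaresAtLeast_two : CSquaresAtLeast 2 2 :=
  ⟨[1], rfl, not_hasConsecWZS_unitSquares_singleton one_ne_zero⟩

theorem cSquaresAtLeast_prime {p : ℕ} [Fact p.Prime] (hp : p ≠ 2) : CSquaresAtLeast p 3 := by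
  obtain ⟨c, hc⟩ := FiniteField.exists_nonsquare (F := ZMod p) (by rwa [ZMod.ringChar_zmod_n])
  have hc0 : c ≠ 0 := by rintro rfl; exact hc IsSquare.zero
  refine ⟨[1, -c], rfl, not_hasConsecWZS_unitSquares_pair one_ne_zero (neg_ne_zero.2 hc0) ?_⟩
  rintro ⟨a, hlen, ha, hsum⟩
  obtain ⟨w₁, w₂, rfl⟩ := length_eq_two.1 hlen
  obtain ⟨u₁, rfl⟩ := ha w₁ (by simp)
  obtain ⟨u₂, rfl⟩ := ha w₂ (by simp)
  refine hc ⟨u₁ * (u₂ : ZMod p)⁻¹, ?_⟩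
  have hu₂ : (u₂ : ZMod p) ≠ 0 := u₂.ne_zero
  simp only [zipWith_cons_cons, mul_one, mul_neg, zipWith_nil_right, sum_cons, sum_nil,
    add_zero] at hsum
  field_simp
  linear_combination -hsum

theorem cSquaresAtLeast_two_pow (r : ℕ) : CSquaresAtLeast (2 ^ r) (2 ^ r) := by
  induction r with
  | zero => exact cSquaresAtLeast_one 1
  | succ r ih => exact ih.mul cSquaresAtLeast_two

theorem cSquaresAtLeast_odd {m : ℕ} (hm : Odd m) :
    CSquaresAtLeast m (3 ^ m.primeFactorsList.length) := by
  induction m using Nat.recOnMul with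
  | zero => exact absurd hm (by decide)
  | one => simpa using cSquaresAtLeast_one 1
  | prime p hp =>
    have : Fact p.Prime := ⟨hp⟩
    have hp2 : p ≠ 2 := by rintro rfl; exact absurd hm (by decide)
    simpa [Nat.primeFactorsList_prime hp] using cSquaresAtLeast_prime hp2
  | mul a b iha ihb =>
    obtain ⟨ha, hb⟩ := Nat.odd_mul.1 hm
    have : NeZero a := ⟨ha.pos.ne'⟩
    have : NeZero b := ⟨hb.pos.ne'⟩
    rw [(Nat.perm_primeFactorsList_mul (NeZero.ne a) (NeZero.ne b)).length_eq, length_append,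
      pow_add]
    exact (iha ha).mul (ihb hb)

/-- For `n = 2^r · m` with `m` odd, `C_{U(n)²}(n) ≥ 2^r · 3^{Ω(m)}`:
there is a sequence of length `2^r · 3^{Ω(m)} - 1` in `Z_n` with no nonempty
consecutive `U(n)²`-weighted zero-sum subsequence. -/
theorem C_squares_lower_bound (r m : ℕ) (hm : Odd m) :
    ∃ L : List (ZMod (2 ^ r * m)),
      L.length = 2 ^ r * 3 ^ m.primeFactorsList.length - 1 ∧
      ¬ HasConsecWZS
        {x : ZMod (2 ^ r * m) | ∃ u : (ZMod (2 ^ r * m))ˣ, (u : ZMod (2 ^ r * m)) ^ 2 = x}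
        L := by
  have : NeZero m := ⟨hm.pos.ne'⟩
  obtain ⟨L, hlen, hL⟩ := (cSquaresAtLeast_two_pow r).mul (cSquaresAtLeast_odd hm)
  exact ⟨L, by omega, hL⟩
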